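/- Define the symmetrized quasi-distance ρ((t,x),(s,y)) := ℓ(t−s, x − e^{(t−s)A}y) + ℓ(s−t, y − e^{(s−t)A}x) and, for (t_0,x_0) ∈ ℝ^{1+nd} and r > 0, the set Q̃_r(t_0,x_0) := { (t,x) : ρ((t,x),(t_0,x_0)) ≤ r }. Then Q̃_r(t_0,x_0) ⊆ Q_r(t_0,x_0) ⊆ Q̃_{4r}(t_0,x_0) for all r > 0 and (t_0,x_0). -/

import Mathlib

open MeasureTheory Real Matrix Finset
open scoped FourierTransform ENNReal NNReal

noncomputable section

/-- Index set of `ℝ^{nd}` viewed as `(ℝ^d)^n`. -/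
abbrev Idx (n d : ℕ) := Fin n × Fin d

/-- The Euclidean space `ℝ^{nd}`. -/
abbrev E (n d : ℕ) := EuclideanSpace ℝ (Idx n d)

variable {n d : ℕ}

def toE (v : Idx n d → ℝ) : E n d := WithLp.toLp 2 v
def ofE (x : E n d) : Idx n d → ℝ := x

/-- Euclidean norm of the `j`-th block of `x ∈ ℝ^{nd}`. -/
def blockNorm (x : E n d) (j : Fin n) : ℝ := Real.sqrt (∑ i : Fin d, (x (j, i)) ^ 2)

/-- The matrix `e^{tA}`: its `(i,j)`-th `d×d`-block is `(t^{j-i}/(j-i)!) I` for `j ≥ i`,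
and `0` otherwise. -/
def expA (n d : ℕ) (t : ℝ) : Matrix (Idx n d) (Idx n d) ℝ := fun p q =>
  if p.1 ≤ q.1 ∧ p.2 = q.2 then
    t ^ ((q.1 : ℕ) - (p.1 : ℕ)) / (((q.1 : ℕ) - (p.1 : ℕ)).factorial : ℝ)
  else 0

/-- `σ^a_t (σ^a_t)^*`: all blocks vanish except the bottom-right `d×d`-block, which is `2a`
(recall that the bottom-right block of `σ^a_t` is the symmetric square root `√(2a_t)`). -/
def sigmaSq (n : ℕ) {d : ℕ} (a : Matrix (Fin d) (Fin d) ℝ) : Matrix (Idx n d) (Idx n d) ℝ :=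
  fun p q => if (p.1 : ℕ) = n - 1 ∧ (q.1 : ℕ) = n - 1 then 2 * a p.2 q.2 else 0

/-- The covariance matrix `Σ_{s,t} = ∫_s^t e^{(t-r)A} σ^a_r (σ^a_r)^* e^{(t-r)A^*} dr`. -/
def SigmaST (n d : ℕ) (a : ℝ → Matrix (Fin d) (Fin d) ℝ) (s t : ℝ) :
    Matrix (Idx n d) (Idx n d) ℝ := fun p q =>
  ∫ r in s..t, (expA n d (t - r) * sigmaSq n (a r) * (expA n d (t - r))ᵀ) p q

/-- Density of the centered Gaussian measure on `ℝ^{nd}` with covariance matrix `S`. -/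
def gaussDensity {n d : ℕ} (S : Matrix (Idx n d) (Idx n d) ℝ) (y : Idx n d → ℝ) : ℝ :=
  Real.exp (-(y ⬝ᵥ S⁻¹.mulVec y) / 2) / Real.sqrt ((2 * π) ^ (n * d) * S.det)

/-- The Gaussian kernel `p^{(0)}_{s,t}`. -/
def pker (n d : ℕ) (a : ℝ → Matrix (Fin d) (Fin d) ℝ) (s t : ℝ) (y : Idx n d → ℝ) : ℝ :=
  gaussDensity (SigmaST n d a s t) y

/-- The two-parameter semigroup `T_{s,t} f (x) = ∫ f(y) p^{(0)}_{s,t}(y - e^{(t-s)A}x) dy`. -/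
def Tst (n d : ℕ) (a : ℝ → Matrix (Fin d) (Fin d) ℝ) (s t : ℝ) (f : E n d → ℂ) (x : E n d) :
    ℂ :=
  ∫ y : E n d, f y * (pker n d a s t (ofE y - (expA n d (t - s)).mulVec (ofE x)) : ℂ)

/-- `a : ℝ → M^d_sym` is measurable, symmetric, with `κ⁻¹ I ≤ a_t ≤ κ I`. -/
def UnifElliptic (d : ℕ) (κ : ℝ) (a : ℝ → Matrix (Fin d) (Fin d) ℝ) : Prop :=
  (∀ i j, Measurable fun t => a t i j) ∧ ∀ t, (a t).IsSymm ∧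
    ∀ y : Fin d → ℝ, κ⁻¹ * (∑ i, y i ^ 2) ≤ y ⬝ᵥ (a t).mulVec y ∧
      y ⬝ᵥ (a t).mulVec y ≤ κ * (∑ i, y i ^ 2)

/-- The fractional Laplacian in the `j`-th block variable, given by the Fourier
multiplier `-|ξ_j|^α` (so that `α = 2γ` corresponds to `Δ^{γ}_{x_j} = -(-Δ_{x_j})^γ`). -/
def fracLap (n d : ℕ) (α : ℝ) (j : Fin n) (f : E n d → ℂ) : E n d → ℂ :=
  𝓕⁻ fun ξ => (-(blockNorm ξ j ^ α) : ℝ) • 𝓕 f ξ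

/-- The multiplier exponent `2/(1+2(n-j))` of `Δ^{1/(1+2(n-j))}_{x_j}`, for `j : Fin n`
(`0`-indexed, so `n - j` in the paper is `n - 1 - j` here). -/
def alphaOf (n : ℕ) (j : Fin n) : ℝ := 2 / (1 + 2 * ((n - 1 - (j : ℕ) : ℕ) : ℝ))

/-- The dilation `Θ_r(x) = (r^{2n-1}x_1, r^{2n-3}x_2, …, r x_n)`. -/
def Theta (n d : ℕ) (r : ℝ) (x : E n d) : E n d :=
  toE fun p => r ^ (2 * (n - 1 - (p.1 : ℕ)) + 1) * x p

/-- `ℓ(t,x) = max { |t|^{1/2}, |x_1|^{1/(2n-1)}, …, |x_{n-1}|^{1/3}, |x_n| }`. -/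
def ell (n d : ℕ) (t : ℝ) (x : E n d) : ℝ :=
  max (|t| ^ ((1 : ℝ) / 2))
    (⨆ j : Fin n, blockNorm x j ^ ((1 : ℝ) / (2 * ((n - 1 - (j : ℕ) : ℕ) : ℝ) + 1)))

/-- The ball `Q_r(t₀,x₀) = {(t,x) : ℓ(t-t₀, x - e^{(t-t₀)A}x₀) ≤ r}`. -/
def Qball (n d : ℕ) (r : ℝ) (t₀ : ℝ) (x₀ : E n d) : Set (ℝ × E n d) :=
  {p | ell n d (p.1 - t₀) (p.2 - toE ((expA n d (p.1 - t₀)).mulVec (ofE x₀))) ≤ r}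

/-- The mollification `f_ε(t,x) = ∫ f(t,y) ε^{-nd} ϱ((x-y)/ε) dy`. -/
def mollify (n d : ℕ) (ϱ : E n d → ℝ) (ε : ℝ) (f : ℝ × E n d → ℂ) (t : ℝ) (x : E n d) : ℂ :=
  ∫ y : E n d, f (t, y) * (((ε ^ (n * d))⁻¹ * ϱ (ε⁻¹ • (x - y)) : ℝ) : ℂ)

/-- `ϱ` is a nonnegative smooth compactly supported probability density. -/
def IsMollifier (n d : ℕ) (ϱ : E n d → ℝ) : Prop :=
  ContDiff ℝ (⊤ : ℕ∞) ϱ ∧ HasCompactSupport ϱ ∧ (∀ x, 0 ≤ ϱ x) ∧ (∫ x : E n d, ϱ x) = 1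

/-- The symmetrized quasi-distance `ρ((t,x),(s,y))`. -/
def rhoDist (n d : ℕ) (p q : ℝ × E n d) : ℝ :=
  ell n d (p.1 - q.1) (p.2 - toE ((expA n d (p.1 - q.1)).mulVec (ofE q.2))) +
    ell n d (q.1 - p.1) (q.2 - toE ((expA n d (q.1 - p.1)).mulVec (ofE p.2)))

/-- The ball `Q̃_r(t₀,x₀)` for the symmetrized quasi-distance. -/
def Qtilde (n d : ℕ) (r : ℝ) (t₀ : ℝ) (x₀ : E n d) : Set (ℝ × E n d) :=
  {p | rhoDist n d p (t₀, x₀) ≤ r}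


def coef (t : ℝ) (i j : ℕ) : ℝ :=
  if i ≤ j then t ^ (j - i) / ((j - i).factorial : ℝ) else 0

lemma expA_apply (t : ℝ) (p q : Idx n d) :
    expA n d t p q = coef t p.1 q.1 * (if p.2 = q.2 then 1 else 0) := by
  unfold expA coef
  by_cases h1 : (p.1 : ℕ) ≤ (q.1 : ℕ) <;> by_cases h2 : p.2 = q.2
  · rw [if_pos ⟨h1, h2⟩, if_pos h1, if_pos h2, mul_one]
  · rw [if_neg (fun h => h2 h.2), if_neg h2, mul_zero]
  · rw [if_neg (fun h => h1 h.1), if_neg h1, zero_mul]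
  · rw [if_neg (fun h => h2 h.2), if_neg h1, zero_mul]

lemma coef_sum_aux (t u : ℝ) (N : ℕ) :
    ∑ k ∈ Finset.range (N+1), t ^ k * u ^ (N - k) / ((k.factorial : ℝ) * ((N-k).factorial : ℝ))
      = (t+u)^N / (N.factorial : ℝ) := by
  rw [add_pow, Finset.sum_div]
  refine Finset.sum_congr rfl fun k hk => ?_
  have hk' : k ≤ N := Nat.lt_succ_iff.mp (Finset.mem_range.mp hk)
  have h2 : ((N.choose k : ℝ)) * (k.factorial : ℝ) * ((N-k).factorial : ℝ) = (N.factorial : ℝ) := by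
    exact_mod_cast congrArg (Nat.cast (R := ℝ)) (Nat.choose_mul_factorial_mul_factorial hk')
  have hkf : (k.factorial : ℝ) ≠ 0 := Nat.cast_ne_zero.mpr (Nat.factorial_ne_zero k)
  have hNkf : ((N-k).factorial : ℝ) ≠ 0 := Nat.cast_ne_zero.mpr (Nat.factorial_ne_zero _)
  have hNf : (N.factorial : ℝ) ≠ 0 := Nat.cast_ne_zero.mpr (Nat.factorial_ne_zero _)
  field_simp
  linear_combination (- t ^ k * u ^ (N - k)) * h2

lemma coef_sum (t u : ℝ) {m : ℕ} (i j : Fin m) :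
    ∑ k : Fin m, coef t (i : ℕ) (k : ℕ) * coef u (k : ℕ) (j : ℕ) = coef (t+u) (i : ℕ) (j : ℕ) := by
  rw [Fin.sum_univ_eq_sum_range (fun k => coef t (i : ℕ) k * coef u k (j : ℕ))]
  by_cases hij : (i : ℕ) ≤ (j : ℕ)
  · have hsub : Finset.Icc (i : ℕ) (j : ℕ) ⊆ Finset.range m := by
      intro k hk
      simp only [Finset.mem_Icc] at hk
      exact Finset.mem_range.mpr (lt_of_le_of_lt hk.2 j.isLt)
    rw [← Finset.sum_subset hsub (by
      intro k hk hk2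
      simp only [Finset.mem_Icc, not_and, not_le] at hk2
      by_cases h1 : (i : ℕ) ≤ k
      · have : (j : ℕ) < k := hk2 h1
        have : ¬ (k ≤ (j : ℕ)) := by omega
        simp [coef, this]
      · simp [coef, h1])]
    rw [← Finset.Ico_add_one_right_eq_Icc, Finset.sum_Ico_eq_sum_range]
    have hN : (j : ℕ) + 1 - (i : ℕ) = ((j : ℕ) - (i : ℕ)) + 1 := by omega
    rw [hN]
    have := coef_sum_aux t u ((j : ℕ) - (i : ℕ))
    rw [coef, if_pos hij, ← this]
    refine Finset.sum_congr rfl fun k hk => ?_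
    have hk' : k ≤ (j : ℕ) - (i : ℕ) := Nat.lt_succ_iff.mp (Finset.mem_range.mp hk)
    have h1 : (i : ℕ) ≤ (i : ℕ) + k := Nat.le_add_right _ _
    have h2 : (i : ℕ) + k ≤ (j : ℕ) := by omega
    rw [coef, if_pos h1, coef, if_pos h2]
    have e1 : (i : ℕ) + k - (i : ℕ) = k := by omega
    have e2 : (j : ℕ) - ((i : ℕ) + k) = (j : ℕ) - (i : ℕ) - k := by omega
    rw [e1, e2]
    rw [div_mul_div_comm]
  · have h0 : ∀ k ∈ Finset.range m, coef t (i : ℕ) k * coef u k (j : ℕ) = 0 := by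
      intro k _
      by_cases h1 : (i : ℕ) ≤ k
      · have : ¬ (k ≤ (j : ℕ)) := by omega
        simp [coef, this]
      · simp [coef, h1]
    rw [Finset.sum_congr rfl h0, Finset.sum_const_zero, coef, if_neg hij]

lemma expA_mul (t u : ℝ) : expA n d t * expA n d u = expA n d (t + u) := by
  ext p q
  rw [Matrix.mul_apply, expA_apply, ← coef_sum t u p.1 q.1, Finset.sum_mul]
  rw [Fintype.sum_prod_type]
  refine Finset.sum_congr rfl fun k _ => ?_
  simp only [expA_apply]
  rw [Finset.sum_eq_single p.2]
  · by_cases h2 : p.2 = q.2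
    · simp [h2]
    · simp [h2]
  · intro b _ hb
    simp [Ne.symm hb]
  · simp

lemma expA_zero : expA n d 0 = 1 := by
  ext p q
  rw [Matrix.one_apply]
  unfold expA
  by_cases h : p = q
  · subst h
    simp
  · rw [if_neg h]
    by_cases h1 : p.1 ≤ q.1 ∧ p.2 = q.2
    · rw [if_pos h1]
      have hne : (p.1 : ℕ) ≠ (q.1 : ℕ) := by
        intro he
        exact h (Prod.ext (Fin.ext he) h1.2)
      have hlt : (p.1 : ℕ) < (q.1 : ℕ) := lt_of_le_of_ne h1.1 hne
      rw [zero_pow (by omega)]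
      simp
    · rw [if_neg h1]

lemma expA_neg_mul (s : ℝ) : expA n d (-s) * expA n d s = 1 := by
  rw [expA_mul, neg_add_cancel, expA_zero]

def bvec (x : E n d) (j : Fin n) : EuclideanSpace ℝ (Fin d) := WithLp.toLp 2 (fun i => x (j, i))

lemma blockNorm_eq (x : E n d) (j : Fin n) : blockNorm x j = ‖bvec x j‖ := by
  rw [EuclideanSpace.norm_eq]
  unfold blockNorm bvec
  congr 1
  exact Finset.sum_congr rfl fun i _ => by rw [Real.norm_eq_abs, sq_abs]

lemma blockNorm_nonneg (x : E n d) (j : Fin n) : 0 ≤ blockNorm x j := Real.sqrt_nonneg _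

lemma blockNorm_neg (x : E n d) (j : Fin n) : blockNorm (-x) j = blockNorm x j := by
  rw [blockNorm_eq, blockNorm_eq]
  have : bvec (-x) j = -(bvec x j) := rfl
  rw [this, norm_neg]

lemma pilp_sum_apply {ι : Type*} (s : Finset ι) (f : ι → EuclideanSpace ℝ (Fin d)) (i : Fin d) :
    (∑ k ∈ s, f k) i = ∑ k ∈ s, f k i := by
  classical
  induction s using Finset.induction_on with
  | empty => rfl
  | @insert a s h ih => rw [Finset.sum_insert h, Finset.sum_insert h, PiLp.add_apply, ih]

lemma bvec_mulVec (t : ℝ) (z : E n d) (j : Fin n) :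
    bvec (toE ((expA n d t).mulVec (ofE z))) j
      = ∑ k : Fin n, coef t (j : ℕ) (k : ℕ) • bvec z k := by
  ext i
  rw [pilp_sum_apply]
  show (expA n d t).mulVec (ofE z) (j, i) = _
  rw [Matrix.mulVec, dotProduct, Fintype.sum_prod_type]
  refine Finset.sum_congr rfl fun k _ => ?_
  rw [Finset.sum_eq_single i]
  · rw [expA_apply]
    show _ = coef t (j : ℕ) (k : ℕ) * z (k, i)
    simp [ofE]
  · intro b _ hb
    rw [expA_apply]
    simp [Ne.symm hb]
  · simp

lemma ell_nonneg (t : ℝ) (x : E n d) : 0 ≤ ell n d t x :=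
  le_trans (Real.rpow_nonneg (abs_nonneg t) _) (le_max_left _ _)

lemma rpow_inv_le_iff {b R : ℝ} (hb : 0 ≤ b) (hR : 0 ≤ R) {m : ℕ} (hm : m ≠ 0) :
    b ^ ((1:ℝ)/(m:ℝ)) ≤ R ↔ b ≤ R ^ m := by
  have hm' : (m : ℝ) ≠ 0 := Nat.cast_ne_zero.mpr hm
  constructor
  · intro h
    have h2 := pow_le_pow_left₀ (Real.rpow_nonneg hb _) h m
    calc b = (b ^ ((1:ℝ)/(m:ℝ))) ^ m := by
            rw [← Real.rpow_natCast (b ^ ((1:ℝ)/(m:ℝ))) m, ← Real.rpow_mul hb,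
              one_div, inv_mul_cancel₀ hm', Real.rpow_one]
      _ ≤ R ^ m := h2
  · intro h
    have h2 := Real.rpow_le_rpow hb h (by positivity : (0:ℝ) ≤ (1:ℝ)/(m:ℝ))
    calc b ^ ((1:ℝ)/(m:ℝ)) ≤ (R ^ m) ^ ((1:ℝ)/(m:ℝ)) := h2
      _ = R := by
          rw [← Real.rpow_natCast R m, ← Real.rpow_mul hR, mul_one_div, div_self hm',
            Real.rpow_one]

lemma ell_le_iff (hn : 0 < n) {R t : ℝ} (hR : 0 ≤ R) (x : E n d) :
    ell n d t x ≤ R ↔ |t| ≤ R ^ 2 ∧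
      ∀ j : Fin n, blockNorm x j ≤ R ^ (2 * (n - 1 - (j:ℕ)) + 1) := by
  have : Nonempty (Fin n) := ⟨⟨0, hn⟩⟩
  unfold ell
  rw [max_le_iff]
  have hA : |t| ^ ((1:ℝ)/2) ≤ R ↔ |t| ≤ R ^ 2 := by
    have := rpow_inv_le_iff (abs_nonneg t) hR (m := 2) (by norm_num)
    simpa using this
  rw [hA]
  have hB : (⨆ j : Fin n, blockNorm x j ^ ((1 : ℝ) / (2 * ((n - 1 - (j : ℕ) : ℕ) : ℝ) + 1))) ≤ R
      ↔ ∀ j : Fin n, blockNorm x j ≤ R ^ (2 * (n - 1 - (j:ℕ)) + 1) := by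
    rw [ciSup_le_iff (Set.Finite.bddAbove (Set.finite_range _))]
    apply forall_congr'
    intro j
    have hcast : 2 * ((n - 1 - (j : ℕ) : ℕ) : ℝ) + 1 = ((2 * (n - 1 - (j:ℕ)) + 1 : ℕ) : ℝ) := by
      push_cast; ring
    rw [hcast, rpow_inv_le_iff (blockNorm_nonneg x j) hR (by omega)]
  rw [hB]

lemma sum_coef_bound (j : Fin n) :
    ∑ k : Fin n, (if (j:ℕ) ≤ (k:ℕ) then (1:ℝ)/(((k:ℕ)-(j:ℕ)).factorial : ℝ) else 0) ≤ 3 := by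
  rw [Fin.sum_univ_eq_sum_range
    (fun k => if (j:ℕ) ≤ k then (1:ℝ)/((k-(j:ℕ)).factorial : ℝ) else 0)]
  rw [← Finset.sum_range_add_sum_Ico _ (le_of_lt j.isLt)]
  have h1 : ∑ k ∈ Finset.range (j:ℕ),
      (if (j:ℕ) ≤ k then (1:ℝ)/((k-(j:ℕ)).factorial:ℝ) else 0) = 0 := by
    apply Finset.sum_eq_zero
    intro k hk
    rw [if_neg (by simpa using Nat.not_le_of_lt (Finset.mem_range.mp hk))]
  rw [h1, zero_add, Finset.sum_Ico_eq_sum_range]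
  have h2 : ∀ i ∈ Finset.range (n - (j:ℕ)),
      (if (j:ℕ) ≤ (j:ℕ)+i then (1:ℝ)/(((j:ℕ)+i-(j:ℕ)).factorial:ℝ) else 0)
        = (1:ℝ)^i/(i.factorial : ℝ) := by
    intro i _
    rw [if_pos (Nat.le_add_right _ _), one_pow]
    have e : (j:ℕ)+i-(j:ℕ) = i := by omega
    rw [e]
  rw [Finset.sum_congr rfl h2]
  have h3 := Real.sum_le_exp_of_nonneg zero_le_one (n - (j:ℕ))
  have h4 := Real.exp_one_lt_d9
  calc (∑ i ∈ Finset.range (n - (j:ℕ)), (1:ℝ)^i/(i.factorial : ℝ)) ≤ Real.exp 1 := h3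
    _ ≤ 3 := by linarith

lemma key_bound {r t : ℝ} (hr : 0 < r) (ht : |t| ≤ r^2) {z : E n d}
    (hz : ∀ k : Fin n, blockNorm z k ≤ r ^ (2 * (n - 1 - (k:ℕ)) + 1)) (j : Fin n) :
    blockNorm (toE ((expA n d t).mulVec (ofE z))) j ≤ 3 * r ^ (2 * (n - 1 - (j:ℕ)) + 1) := by
  rw [blockNorm_eq, bvec_mulVec]
  calc ‖∑ k : Fin n, coef t (j:ℕ) (k:ℕ) • bvec z k‖
      ≤ ∑ k : Fin n, ‖coef t (j:ℕ) (k:ℕ) • bvec z k‖ := norm_sum_le _ _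
    _ = ∑ k : Fin n, |coef t (j:ℕ) (k:ℕ)| * blockNorm z k := by
        refine Finset.sum_congr rfl fun k _ => ?_
        rw [norm_smul, Real.norm_eq_abs, blockNorm_eq]
    _ ≤ ∑ k : Fin n, (if (j:ℕ) ≤ (k:ℕ) then (1:ℝ)/(((k:ℕ)-(j:ℕ)).factorial : ℝ) else 0)
          * r ^ (2*(n-1-(j:ℕ))+1) := by
        refine Finset.sum_le_sum fun k _ => ?_
        by_cases hjk : (j:ℕ) ≤ (k:ℕ)
        · rw [if_pos hjk, coef, if_pos hjk]
          have hm : |t ^ ((k:ℕ)-(j:ℕ)) / (((k:ℕ)-(j:ℕ)).factorial : ℝ)|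
              = |t| ^ ((k:ℕ)-(j:ℕ)) / (((k:ℕ)-(j:ℕ)).factorial : ℝ) := by
            rw [abs_div, abs_pow, Nat.abs_cast]
          rw [hm]
          have h1 : |t| ^ ((k:ℕ)-(j:ℕ)) ≤ (r^2) ^ ((k:ℕ)-(j:ℕ)) :=
            pow_le_pow_left₀ (abs_nonneg t) ht _
          have hfpos : (0:ℝ) < (((k:ℕ)-(j:ℕ)).factorial : ℝ) := by positivity
          have key : (r^2) ^ ((k:ℕ)-(j:ℕ)) * r ^ (2*(n-1-(k:ℕ))+1) = r ^ (2*(n-1-(j:ℕ))+1) := by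
            rw [← pow_mul, ← pow_add]
            congr 1
            have := k.isLt
            omega
          calc |t| ^ ((k:ℕ)-(j:ℕ)) / (((k:ℕ)-(j:ℕ)).factorial : ℝ) * blockNorm z k
              ≤ (r^2) ^ ((k:ℕ)-(j:ℕ)) / (((k:ℕ)-(j:ℕ)).factorial : ℝ) * r ^ (2*(n-1-(k:ℕ))+1) :=
                mul_le_mul ((div_le_div_iff_of_pos_right hfpos).mpr h1) (hz k) (blockNorm_nonneg z k)
                  (by positivity)
            _ = (1:ℝ)/(((k:ℕ)-(j:ℕ)).factorial : ℝ) * r ^ (2*(n-1-(j:ℕ))+1) := by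
                rw [div_mul_eq_mul_div, key, ← one_div_mul_eq_div]
        · rw [if_neg hjk, coef, if_neg hjk, abs_zero, zero_mul, zero_mul]
    _ = (∑ k : Fin n, (if (j:ℕ) ≤ (k:ℕ) then (1:ℝ)/(((k:ℕ)-(j:ℕ)).factorial : ℝ) else 0))
          * r ^ (2*(n-1-(j:ℕ))+1) := (Finset.sum_mul _ _ _).symm
    _ ≤ 3 * r ^ (2*(n-1-(j:ℕ))+1) :=
        mul_le_mul_of_nonneg_right (sum_coef_bound j) (by positivity)


/-- `Q̃_r(t₀,x₀) ⊆ Q_r(t₀,x₀) ⊆ Q̃_{4r}(t₀,x₀)`. -/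
theorem statement7 (n d : ℕ) (hn : 2 ≤ n) (hd : 1 ≤ d)
    (r : ℝ) (hr : 0 < r) (t₀ : ℝ) (x₀ : E n d) :
    Qtilde n d r t₀ x₀ ⊆ Qball n d r t₀ x₀ ∧
      Qball n d r t₀ x₀ ⊆ Qtilde n d (4 * r) t₀ x₀ := by
  have hn0 : 0 < n := by omega
  constructor
  · intro p hp
    have h2 := ell_nonneg (n := n) (d := d) (t₀ - p.1)
      (x₀ - toE ((expA n d (t₀ - p.1)).mulVec (ofE p.2)))
    simp only [Qtilde, Set.mem_setOf_eq, rhoDist] at hp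
    simp only [Qball, Set.mem_setOf_eq]
    linarith
  · intro p hp
    simp only [Qball, Set.mem_setOf_eq] at hp
    set s := p.1 - t₀ with hs
    set z : E n d := p.2 - toE ((expA n d s).mulVec (ofE x₀)) with hzdef
    have hp' : ell n d s z ≤ r := hp
    rw [ell_le_iff hn0 hr.le] at hp
    obtain ⟨ht, hblocks⟩ := hp
    have e1 : t₀ - p.1 = -s := by rw [hs]; ring
    have key : (expA n d (-s)).mulVec (ofE z)
        = (expA n d (-s)).mulVec (ofE p.2) - ofE x₀ := by
      have e0 : ofE z = ofE p.2 - (expA n d s).mulVec (ofE x₀) := by simp [hzdef, ofE, toE]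
      rw [e0, Matrix.mulVec_sub, Matrix.mulVec_mulVec, expA_neg_mul, Matrix.one_mulVec]
    have hw : x₀ - toE ((expA n d (t₀ - p.1)).mulVec (ofE p.2))
        = -(toE ((expA n d (-s)).mulVec (ofE z))) := by
      rw [e1]
      calc x₀ - toE ((expA n d (-s)).mulVec (ofE p.2))
          = -(toE ((expA n d (-s)).mulVec (ofE p.2)) - x₀) := (neg_sub _ _).symm
        _ = -(toE ((expA n d (-s)).mulVec (ofE z))) := by
            rw [congrArg toE key]
            simp [toE, ofE]
    have hsecond : ell n d (t₀ - p.1) (x₀ - toE ((expA n d (t₀ - p.1)).mulVec (ofE p.2)))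
        ≤ 3 * r := by
      rw [ell_le_iff hn0 (by linarith : (0:ℝ) ≤ 3*r)]
      constructor
      · rw [e1, abs_neg]
        calc |s| ≤ r^2 := ht
          _ ≤ (3*r)^2 := by nlinarith
      · intro j
        rw [hw, blockNorm_neg]
        calc blockNorm (toE ((expA n d (-s)).mulVec (ofE z))) j
            ≤ 3 * r ^ (2*(n-1-(j:ℕ))+1) := key_bound hr (by rwa [abs_neg]) hblocks j
          _ ≤ (3*r) ^ (2*(n-1-(j:ℕ))+1) := by
              rw [mul_pow]
              exact mul_le_mul_of_nonneg_right (le_self_pow₀ (by norm_num) (by omega))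
                (by positivity)
    simp only [Qtilde, Set.mem_setOf_eq, rhoDist]
    have hfirst : ell n d (p.1 - t₀) (p.2 - toE ((expA n d (p.1 - t₀)).mulVec (ofE x₀))) ≤ r := hp'
    linarith
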